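/- Rectangle dominance implies pointwise dominance: if m dynamically dominates every corner of an axis-aligned box B with respect to q, and every point of B lies in the same orthant of q as m (componentwise side condition), then m dynamically dominates every point x ∈ B with respect to q. -/
import Mathlib


def DynDom {d : ℕ} (c x y : Fin d → ℝ) : Prop :=
  (∀ i, |x i - c i| ≤ |y i - c i|) ∧ ∃ j, |x j - c j| < |y j - c j|

theorem box_dominance {d : ℕ} (q m l u : Fin d → ℝ)
    (hlu : ∀ i, l i ≤ u i)
    (hcorners : ∀ x : Fin d → ℝ, (∀ i, x i = l i ∨ x i = u i) → DynDom q m x)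
    (horth : ∀ x : Fin d → ℝ, (∀ i, l i ≤ x i ∧ x i ≤ u i) →
      ∀ i, x i ≤ q i ↔ m i ≤ q i) :
    ∀ x : Fin d → ℝ, (∀ i, l i ≤ x i ∧ x i ≤ u i) → DynDom q m x := by
  intro x hx
  set c : Fin d → ℝ := fun i => if m i ≤ q i then u i else l i with hc
  have hcorner : ∀ i, c i = l i ∨ c i = u i := by
    intro i; by_cases h : m i ≤ q i <;> simp [hc, h]
  have hdom := hcorners c hcorner
  have hlbox : ∀ i, l i ≤ l i ∧ l i ≤ u i := fun i => ⟨le_refl _, hlu i⟩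
  have hubox : ∀ i, l i ≤ u i ∧ u i ≤ u i := fun i => ⟨hlu i, le_refl _⟩
  have key : ∀ i, |c i - q i| ≤ |x i - q i| := by
    intro i
    by_cases h : m i ≤ q i
    · have hx' : x i ≤ q i := (horth x hx i).mpr h
      have hu' : u i ≤ q i := (horth u hubox i).mpr h
      have : c i = u i := by simp [hc, h]
      rw [this, abs_of_nonpos (by linarith), abs_of_nonpos (by linarith)]
      linarith [(hx i).2]
    · have hx' : ¬ x i ≤ q i := fun hh => h ((horth x hx i).mp hh)
      have hl' : ¬ l i ≤ q i := fun hh => h ((horth l hlbox i).mp hh)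
      push_neg at hx' hl'
      have : c i = l i := by simp [hc, h]
      rw [this, abs_of_nonneg (by linarith), abs_of_nonneg (by linarith)]
      linarith [(hx i).1]
  refine ⟨fun i => le_trans (hdom.1 i) (key i), ?_⟩
  obtain ⟨j, hj⟩ := hdom.2
  exact ⟨j, lt_of_lt_of_le hj (key j)⟩
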